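/- arXiv:2407.09800 — 8 statements merged into one kernel-verified Lean document; each statement's English description precedes it below -/
import Mathlib

section
/- For positive masses m1, m2, m3 and nonnegative reals φ1, φ2, φ3, the 2×2 matrix A (defined as in the planar three-body reduction) has only real eigenvalues, and both eigenvalues are ≤ 0. -/
/-- The matrix `A` of the planar three-body reduction has only real eigenvalues,
and both eigenvalues are nonpositive. -/
theorem eigenvalues_three_body_matrix_real_nonpos (m1 m2 m3 φ1 φ2 φ3 : ℝ)
    (hm1 : 0 < m1) (hm2 : 0 < m2) (hm3 : 0 < m3)
    (hφ1 : 0 ≤ φ1) (hφ2 : 0 ≤ φ2) (hφ3 : 0 ≤ φ3) :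
    ∀ μ : ℂ,
      ((Matrix.charpoly
        ((!![-m2 * φ3 - (m1 + m3) * φ2, m1 * (φ3 - φ2);
             m2 * (φ3 - φ1), -m1 * φ3 - (m3 + m2) * φ1] :
            Matrix (Fin 2) (Fin 2) ℝ).map (Complex.ofReal))).IsRoot μ) →
        ∃ r : ℝ, μ = (r : ℂ) ∧ r ≤ 0 := by
  intro μ hroot
  set t : ℝ := (-m2 * φ3 - (m1 + m3) * φ2) + (-m1 * φ3 - (m3 + m2) * φ1) with ht_def
  set d : ℝ := (-m2 * φ3 - (m1 + m3) * φ2) * (-m1 * φ3 - (m3 + m2) * φ1)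
      - m1 * (φ3 - φ2) * (m2 * (φ3 - φ1)) with hd_def
  have hμ : μ ^ 2 - (t : ℂ) * μ + (d : ℂ) = 0 := by
    have := hroot
    simp only [Matrix.charpoly, Matrix.det_fin_two, Polynomial.IsRoot,
      Matrix.charmatrix_apply_eq, Matrix.charmatrix_apply_ne _ _ _ (by decide : (0 : Fin 2) ≠ 1),
      Matrix.charmatrix_apply_ne _ _ _ (by decide : (1 : Fin 2) ≠ 0),
      Polynomial.eval_sub, Polynomial.eval_mul, Polynomial.eval_neg, Polynomial.eval_X,
      Polynomial.eval_C, Matrix.map_apply, Matrix.of_apply,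
      Matrix.cons_val', Matrix.cons_val_zero, Matrix.cons_val_one, Matrix.head_cons,
      Matrix.head_fin_const, Matrix.empty_val', Matrix.cons_val_fin_one] at this
    push_cast at this ⊢
    rw [ht_def, hd_def]
    push_cast
    linear_combination this
  have ht : t ≤ 0 := by
    have := mul_nonneg hm1.le hφ3
    have := mul_nonneg hm2.le hφ3
    have := mul_nonneg (add_nonneg hm1.le hm3.le) hφ2
    have := mul_nonneg (add_nonneg hm3.le hm2.le) hφ1
    rw [ht_def]; linarith
  have hd : 0 ≤ d := by
    have h1 : 0 ≤ m2 * (m1 + m2 + m3) * (φ1 * φ3) := by positivity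
    have h2 : 0 ≤ m1 * (m1 + m2 + m3) * (φ2 * φ3) := by positivity
    have h3 : 0 ≤ m3 * (m1 + m2 + m3) * (φ1 * φ2) := by positivity
    rw [hd_def]; nlinarith
  have hdisc : 0 ≤ t ^ 2 - 4 * d := by
    have key : (m2 + m3) ^ 2 * (t ^ 2 - 4 * d)
        = ((m2 + m3) ^ 2 * (φ1 - φ3) + (2 * m1 * m2 - (m2 + m3) * (m1 + m3)) * (φ2 - φ3)) ^ 2
          + 4 * m1 * m2 * m3 * (m1 + m2 + m3) * (φ2 - φ3) ^ 2 := by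
      rw [ht_def, hd_def]; ring
    have h1 : 0 ≤ ((m2 + m3) ^ 2 * (φ1 - φ3)
        + (2 * m1 * m2 - (m2 + m3) * (m1 + m3)) * (φ2 - φ3)) ^ 2 := sq_nonneg _
    have h2 : 0 ≤ 4 * m1 * m2 * m3 * (m1 + m2 + m3) * (φ2 - φ3) ^ 2 := by positivity
    have h3 : 0 < (m2 + m3) ^ 2 := by positivity
    nlinarith
  set s : ℝ := Real.sqrt (t ^ 2 - 4 * d) with hs_def
  have hs0 : 0 ≤ s := Real.sqrt_nonneg _
  have hs2 : s ^ 2 = t ^ 2 - 4 * d := Real.sq_sqrt hdisc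
  have hsle : s ≤ -t := by
    have : s ≤ Real.sqrt (t ^ 2) := Real.sqrt_le_sqrt (by linarith)
    rwa [Real.sqrt_sq_eq_abs, abs_of_nonpos ht] at this
  have hfac : (μ - (((t + s) / 2 : ℝ) : ℂ)) * (μ - (((t - s) / 2 : ℝ) : ℂ)) = 0 := by
    have hs2' : (s : ℂ) ^ 2 = (t : ℂ) ^ 2 - 4 * (d : ℂ) := by
      have h := congrArg (Complex.ofReal) hs2
      push_cast at h
      linear_combination h
    push_cast
    linear_combination hμ - (1/4 : ℂ) * hs2'
  rcases mul_eq_zero.mp hfac with h | h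
  · exact ⟨(t + s) / 2, sub_eq_zero.mp h, by linarith⟩
  · exact ⟨(t - s) / 2, sub_eq_zero.mp h, by linarith⟩
end

section
/- Let m1, m2, m3 > 0, M = m1+m2+m3, and let P be the 2×2 matrix with P11 = -m1/(m1+m3), P12 = (1/(m1+m3))·√(m1·m3·M/m2), P21 = 1, P22 = 0. Then P is invertible and for all nonnegative φ1, φ2, φ3, the matrix P⁻¹·A(φ1,φ2,φ3)·P is symmetric, where A(φ1,φ2,φ3) is the matrix with entries A11 = -m2·φ3 - (m1+m3)·φ2, A12 = m1·(φ3 - φ2), A21 = m2·(φ3 - φ1), A22 = -m1·φ3 - (m3+m2)·φ1. -/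
open Matrix

/-- The conjugation matrix `P` is invertible and `P⁻¹ A P` is symmetric. -/
theorem conjugated_three_body_matrix_symm (m1 m2 m3 : ℝ)
    (hm1 : 0 < m1) (hm2 : 0 < m2) (hm3 : 0 < m3) :
    IsUnit (!![-m1 / (m1 + m3), (1 / (m1 + m3)) * Real.sqrt (m1 * m3 * (m1 + m2 + m3) / m2);
               1, 0] : Matrix (Fin 2) (Fin 2) ℝ) ∧
    ∀ φ1 φ2 φ3 : ℝ, 0 ≤ φ1 → 0 ≤ φ2 → 0 ≤ φ3 →
      letI P : Matrix (Fin 2) (Fin 2) ℝ :=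
        !![-m1 / (m1 + m3), (1 / (m1 + m3)) * Real.sqrt (m1 * m3 * (m1 + m2 + m3) / m2); 1, 0]
      letI A : Matrix (Fin 2) (Fin 2) ℝ :=
        !![-m2 * φ3 - (m1 + m3) * φ2, m1 * (φ3 - φ2);
           m2 * (φ3 - φ1), -m1 * φ3 - (m3 + m2) * φ1]
      (P⁻¹ * A * P)ᵀ = P⁻¹ * A * P := by
  set s : ℝ := Real.sqrt (m1 * m3 * (m1 + m2 + m3) / m2) with hs
  have h13 : (0:ℝ) < m1 + m3 := by linarith
  have harg : (0:ℝ) < m1 * m3 * (m1 + m2 + m3) / m2 := by positivity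
  have hspos : 0 < s := Real.sqrt_pos.mpr harg
  have hs2 : s ^ 2 = m1 * m3 * (m1 + m2 + m3) / m2 := by
    rw [hs, sq, Real.mul_self_sqrt harg.le]
  have hsne : s ≠ 0 := hspos.ne'
  have h13ne : m1 + m3 ≠ 0 := h13.ne'
  set P : Matrix (Fin 2) (Fin 2) ℝ :=
    !![-m1 / (m1 + m3), (1 / (m1 + m3)) * s; 1, 0] with hP
  have hPB : P * !![0, 1; (m1 + m3) / s, m1 / s] = 1 := by
    rw [hP]
    ext i j
    fin_cases i <;> fin_cases j <;>
      simp [Matrix.mul_apply, Fin.sum_univ_two] <;> field_simp <;> ring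
  have hinv : P⁻¹ = !![0, 1; (m1 + m3) / s, m1 / s] := Matrix.inv_eq_right_inv hPB
  have hs2' : m2 * s ^ 2 = m1 * m3 * (m1 + m2 + m3) := by
    rw [hs2]; field_simp
  constructor
  · exact @isUnit_of_invertible _ _ _ (invertibleOfRightInverse _ _ hPB)
  · intro φ1 φ2 φ3 _ _ _
    rw [hinv, hP]
    ext i j
    fin_cases i <;> fin_cases j <;>
      simp [Matrix.mul_apply, Fin.sum_univ_two, Matrix.transpose_apply]
    · field_simp
      linear_combination (-(φ3 - φ1)) * hs2'
    · field_simp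
      linear_combination (φ3 - φ1) * hs2'
end

section
/- With m1, m2, m3 > 0, P as above, and φ1, φ2, φ3 ≥ 0, the symmetric matrix P⁻¹·A(φ1,φ2,φ3)·P is negative semidefinite. -/
open Matrix

/-- The symmetric matrix `P⁻¹ A P` is negative semidefinite. -/
theorem conjugated_three_body_matrix_negSemidef (m1 m2 m3 φ1 φ2 φ3 : ℝ)
    (hm1 : 0 < m1) (hm2 : 0 < m2) (hm3 : 0 < m3)
    (hφ1 : 0 ≤ φ1) (hφ2 : 0 ≤ φ2) (hφ3 : 0 ≤ φ3) :
    letI P : Matrix (Fin 2) (Fin 2) ℝ :=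
      !![-m1 / (m1 + m3), (1 / (m1 + m3)) * Real.sqrt (m1 * m3 * (m1 + m2 + m3) / m2); 1, 0]
    letI A : Matrix (Fin 2) (Fin 2) ℝ :=
      !![-m2 * φ3 - (m1 + m3) * φ2, m1 * (φ3 - φ2);
         m2 * (φ3 - φ1), -m1 * φ3 - (m3 + m2) * φ1]
    ∀ v : Fin 2 → ℝ, v ⬝ᵥ (P⁻¹ * A * P).mulVec v ≤ 0 := by
  intro v
  have hm13 : (0:ℝ) < m1 + m3 := by linarith
  have hc : (0:ℝ) < m1 * m3 * (m1 + m2 + m3) / m2 := by positivity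
  set s := Real.sqrt (m1 * m3 * (m1 + m2 + m3) / m2) with hsdef
  have hspos : 0 < s := Real.sqrt_pos.mpr hc
  have hs2 : s ^ 2 = m1 * m3 * (m1 + m2 + m3) / m2 := Real.sq_sqrt hc.le
  have hs0 : s ≠ 0 := ne_of_gt hspos
  have hPinv : (!![-m1 / (m1 + m3), (1 / (m1 + m3)) * s; 1, 0] : Matrix (Fin 2) (Fin 2) ℝ)⁻¹
      = !![0, 1; (m1 + m3) / s, m1 / s] := by
    apply Matrix.inv_eq_left_inv
    ext i j
    fin_cases i <;> fin_cases j <;>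
      simp [Matrix.mul_apply, Fin.sum_univ_two] <;> (field_simp <;> ring)
  rw [hPinv]
  simp [Matrix.mul_apply, Matrix.mulVec, dotProduct, Fin.sum_univ_two]
  have key : v 0 *
        ((m2 * (φ3 - φ1) * (-m1 / (m1 + m3)) + (-(m1 * φ3) - (m3 + m2) * φ1)) * v 0 +
          m2 * (φ3 - φ1) * ((m1 + m3)⁻¹ * s) * v 1) +
      v 1 *
        ((((m1 + m3) / s * (-(m2 * φ3) - (m1 + m3) * φ2) + m1 / s * (m2 * (φ3 - φ1))) * (-m1 / (m1 + m3)) +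
              ((m1 + m3) / s * (m1 * (φ3 - φ2)) + m1 / s * (-(m1 * φ3) - (m3 + m2) * φ1))) *
            v 0 +
          ((m1 + m3) / s * (-(m2 * φ3) - (m1 + m3) * φ2) + m1 / s * (m2 * (φ3 - φ1))) * ((m1 + m3)⁻¹ * s) * v 1)
      = -(φ3 * m2 / (m3 * (m1 + m3)) * (s * v 0 - m3 * v 1) ^ 2
          + φ1 * m2 / (m1 * (m1 + m3)) * (s * v 0 + m1 * v 1) ^ 2
          + φ2 * (m1 + m3) * (v 1) ^ 2) := by
    have h130 : m1 + m3 ≠ 0 := ne_of_gt hm13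
    have h10 : m1 ≠ 0 := ne_of_gt hm1
    have h20 : m2 ≠ 0 := ne_of_gt hm2
    have h30 : m3 ≠ 0 := ne_of_gt hm3
    linear_combination (norm := (field_simp; ring1)) (m2 * ((m1 * φ3 + m3 * φ1) * s * v 0 ^ 2
        - m1 * m3 * (φ3 - φ1) * v 0 * v 1) / (m1 * m3 * s * (m1 + m3))) * hs2
  rw [key]
  have h1 : 0 ≤ φ3 * m2 / (m3 * (m1 + m3)) * (s * v 0 - m3 * v 1) ^ 2 := by positivity
  have h2 : 0 ≤ φ1 * m2 / (m1 * (m1 + m3)) * (s * v 0 + m1 * v 1) ^ 2 := by positivity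
  have h3 : 0 ≤ φ2 * (m1 + m3) * (v 1) ^ 2 := by positivity
  linarith
end

section
/- Let θ > 0, X0 an invertible real 2×2 matrix, Ẋ0 a real 2×2 matrix, and set Y(t) = cos(θt)·X0 + (sin(θt)/θ)·Ẋ0. For t ∈ (0, π/θ), det(Y(t)) = 0 if and only if -θ·cot(θt) is an eigenvalue of C0 = Ẋ0·X0⁻¹. -/
open Matrix Real in
lemma eval_charpoly_aux (M : Matrix (Fin 2) (Fin 2) ℝ) (r : ℝ) :
    M.charpoly.eval r = (r • (1 : Matrix (Fin 2) (Fin 2) ℝ) - M).det := by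
  rw [Matrix.charpoly, ← Polynomial.coe_evalRingHom, RingHom.map_det]
  congr 1
  ext i j
  by_cases h : i = j <;>
    simp [Matrix.charmatrix_apply, h, Matrix.one_apply, Matrix.diagonal_apply]

open Matrix Real in
theorem det_zero_iff_eigenvalue (θ : ℝ) (hθ : 0 < θ)
    (X0 Xdot0 : Matrix (Fin 2) (Fin 2) ℝ) (hX0 : IsUnit X0.det)
    (t : ℝ) (ht : t ∈ Set.Ioo 0 (Real.pi / θ)) :
    (Real.cos (θ * t) • X0 + (Real.sin (θ * t) / θ) • Xdot0).det = 0 ↔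
      (Matrix.charpoly (Xdot0 * X0⁻¹)).IsRoot (-θ * Real.cot (θ * t)) := by
  obtain ⟨ht0, htπ⟩ := ht
  have hθt : 0 < θ * t := mul_pos hθ ht0
  have hθtπ : θ * t < Real.pi := by
    rw [← lt_div_iff₀' hθ]; exact htπ
  have hs : Real.sin (θ * t) ≠ 0 := ne_of_gt (Real.sin_pos_of_pos_of_lt_pi hθt hθtπ)
  have hθ' : θ ≠ 0 := ne_of_gt hθ
  set c := θ * Real.cot (θ * t) with hc
  have hcos : Real.cos (θ * t) = Real.sin (θ * t) / θ * c := by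
    rw [hc, Real.cot_eq_cos_div_sin]; field_simp
  have hY : Real.cos (θ * t) • X0 + (Real.sin (θ * t) / θ) • Xdot0
      = (Real.sin (θ * t) / θ) • ((c • (1 : Matrix (Fin 2) (Fin 2) ℝ) + Xdot0 * X0⁻¹) * X0) := by
    rw [Matrix.add_mul, Matrix.smul_mul, Matrix.one_mul,
      Matrix.nonsing_inv_mul_cancel_right _ _ hX0, smul_add, smul_smul, hcos]
  have heval : (Matrix.charpoly (Xdot0 * X0⁻¹)).eval (-c)
      = (c • (1 : Matrix (Fin 2) (Fin 2) ℝ) + Xdot0 * X0⁻¹).det := by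
    rw [eval_charpoly_aux]
    have : (-c) • (1 : Matrix (Fin 2) (Fin 2) ℝ) - Xdot0 * X0⁻¹
        = -(c • (1 : Matrix (Fin 2) (Fin 2) ℝ) + Xdot0 * X0⁻¹) := by
      rw [neg_smul]; abel
    rw [this, Matrix.det_neg]
    simp
  rw [hY, Matrix.det_smul, Matrix.det_mul]
  constructor
  · intro h
    have h2 : (Real.sin (θ * t) / θ) ^ Fintype.card (Fin 2) ≠ 0 := by
      positivity
    have h3 := (mul_eq_zero.mp h).resolve_left h2
    have h4 := (mul_eq_zero.mp h3).resolve_right hX0.ne_zero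
    show (Matrix.charpoly (Xdot0 * X0⁻¹)).eval (-θ * Real.cot (θ * t)) = 0
    rw [show -θ * Real.cot (θ * t) = -c by rw [hc]; ring, heval, h4]
  · intro h
    have h4 : (c • (1 : Matrix (Fin 2) (Fin 2) ℝ) + Xdot0 * X0⁻¹).det = 0 := by
      rw [← heval]
      have := h
      rwa [show -θ * Real.cot (θ * t) = -c by rw [hc]; ring] at this
    rw [h4]; ring
end

section
/- Let θ > 0, X0 invertible with C0 = Ẋ0·X0⁻¹ having real spectrum {λ1, λ2}, and let πs = min{λ1, λ2}. Then the first positive zero of t ↦ det(cos(θt)·X0 + (sin(θt)/θ)·Ẋ0) equals (1/θ)·arccot(-πs/θ), where arccot takes values in (0, π). -/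
noncomputable def arccot (x : ℝ) : ℝ := Real.pi / 2 - Real.arctan x

lemma cos_arctan_pos' (x : ℝ) : 0 < Real.cos (Real.arctan x) := by
  rw [Real.cos_arctan]; positivity

lemma sin_arctan_eq (x : ℝ) :
    Real.sin (Real.arctan x) = x * Real.cos (Real.arctan x) := by
  have h := Real.tan_arctan x
  rw [Real.tan_eq_sin_div_cos] at h
  field_simp [(cos_arctan_pos' x).ne'] at h
  linarith

lemma factor_eq (x s : ℝ) :
    Real.cos s - x * Real.sin s
      = Real.cos (s + Real.arctan x) / Real.cos (Real.arctan x) := by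
  rw [Real.cos_add, sin_arctan_eq]
  field_simp [(cos_arctan_pos' x).ne']

lemma factor_zero (x : ℝ) :
    Real.cos (arccot x) - x * Real.sin (arccot x) = 0 := by
  rw [factor_eq]
  have : arccot x + Real.arctan x = Real.pi / 2 := by unfold arccot; ring
  rw [this, Real.cos_pi_div_two, zero_div]

lemma factor_pos (x s : ℝ) (hs : 0 < s) (hs' : s < arccot x) :
    0 < Real.cos s - x * Real.sin s := by
  rw [factor_eq]
  apply div_pos _ (cos_arctan_pos' x)
  apply Real.cos_pos_of_mem_Ioo
  constructor
  · have := Real.neg_pi_div_two_lt_arctan x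
    linarith
  · unfold arccot at hs'; linarith

open Matrix Real Polynomial in
theorem first_zero_of_det (θ : ℝ) (hθ : 0 < θ)
    (X0 Xdot0 : Matrix (Fin 2) (Fin 2) ℝ) (hX0 : IsUnit X0.det)
    (l1 l2 : ℝ)
    (hspec : Matrix.charpoly (Xdot0 * X0⁻¹) = (X - C l1) * (X - C l2)) :
    IsLeast {t : ℝ | 0 < t ∧
        (Real.cos (θ * t) • X0 + (Real.sin (θ * t) / θ) • Xdot0).det = 0}
      ((1 / θ) * arccot (-(min l1 l2) / θ)) := by
  have hθ' : θ ≠ 0 := hθ.ne'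
  set M := Xdot0 * X0⁻¹ with hM
  -- trace and det of M
  have hr : (X - C l1) * (X - C l2) = X ^ 2 - C (l1 + l2) * X + C (l1 * l2) := by
    rw [C_add, C_mul]; ring
  have htr : M.trace = l1 + l2 := by
    have h := Matrix.trace_eq_neg_charpoly_coeff M
    rw [hspec, hr] at h
    simpa [coeff_X_pow] using h
  have hdet : M.det = l1 * l2 := by
    have h := Matrix.det_eq_sign_charpoly_coeff M
    rw [hspec, hr] at h
    simpa [coeff_X_pow] using h
  -- determinant factorization
  have hX0det : X0.det ≠ 0 := hX0.ne_zero
  have key : ∀ a b : ℝ, (a • X0 + b • Xdot0).det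
      = (a + b * l1) * (a + b * l2) * X0.det := by
    intro a b
    have hfac : a • X0 + b • Xdot0 = (a • (1 : Matrix (Fin 2) (Fin 2) ℝ) + b • M) * X0 := by
      rw [hM, Matrix.add_mul, Matrix.smul_mul, Matrix.smul_mul, Matrix.one_mul,
        Matrix.mul_assoc, Matrix.nonsing_inv_mul X0 hX0, Matrix.mul_one]
    rw [hfac, Matrix.det_mul]
    have h2 : (a • (1 : Matrix (Fin 2) (Fin 2) ℝ) + b • M).det
        = a ^ 2 + a * b * M.trace + b ^ 2 * M.det := by
      simp [Matrix.det_fin_two, Matrix.trace_fin_two, Matrix.one_apply]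
      ring
    rw [h2, htr, hdet]; ring
  -- each scalar factor
  have hfactor : ∀ (l t : ℝ), Real.cos (θ * t) + Real.sin (θ * t) / θ * l
      = Real.cos (θ * t) - (-l / θ) * Real.sin (θ * t) := by
    intro l t; field_simp; ring
  have hzero_iff : ∀ t : ℝ, (Real.cos (θ * t) • X0 + (Real.sin (θ * t) / θ) • Xdot0).det = 0 ↔
      (Real.cos (θ * t) - (-l1 / θ) * Real.sin (θ * t) = 0 ∨
       Real.cos (θ * t) - (-l2 / θ) * Real.sin (θ * t) = 0) := by
    intro t
    rw [key, mul_eq_zero, mul_eq_zero]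
    constructor
    · rintro (⟨h | h⟩ | h)
      · left; rw [← hfactor]; linarith
      · right; rw [← hfactor]; linarith
      · exact absurd h hX0det
    · rintro (h | h)
      · rw [← hfactor] at h; exact Or.inl (Or.inl (by linarith))
      · rw [← hfactor] at h; exact Or.inl (Or.inr (by linarith))
  set μ := min l1 l2 with hμ
  set t0 := (1 / θ) * arccot (-μ / θ) with ht0
  have harccot_pos : ∀ x : ℝ, 0 < arccot x := by
    intro x
    have := Real.arctan_lt_pi_div_two x
    unfold arccot; linarith
  have hθt0 : θ * t0 = arccot (-μ / θ) := by
    rw [ht0]; field_simp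
  constructor
  · refine ⟨mul_pos (by positivity) (harccot_pos _), ?_⟩
    rw [hzero_iff]
    rcases min_choice l1 l2 with h | h
    · left; rw [hθt0, show (-l1 / θ) = (-μ / θ) by rw [hμ, h]]; exact factor_zero _
    · right; rw [hθt0, show (-l2 / θ) = (-μ / θ) by rw [hμ, h]]; exact factor_zero _
  · rintro t ⟨ht, hdet0⟩
    rw [hzero_iff] at hdet0
    -- for each l with μ ≤ l, if factor l vanishes at t then t0 ≤ t
    have main : ∀ l : ℝ, μ ≤ l →
        Real.cos (θ * t) - (-l / θ) * Real.sin (θ * t) = 0 → t0 ≤ t := by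
      intro l hl hf
      have hle : arccot (-μ / θ) ≤ arccot (-l / θ) := by
        unfold arccot
        have : Real.arctan (-l / θ) ≤ Real.arctan (-μ / θ) :=
          Real.arctan_strictMono.monotone ((div_le_div_iff_of_pos_right hθ).mpr (by linarith))
        linarith
      by_contra hlt
      push_neg at hlt
      have hst : θ * t < arccot (-l / θ) := by
        calc θ * t < θ * t0 := by exact mul_lt_mul_of_pos_left hlt hθ
        _ = arccot (-μ / θ) := hθt0
        _ ≤ arccot (-l / θ) := hle
      have := factor_pos (-l / θ) (θ * t) (by positivity) hst
      linarith
    rcases hdet0 with h | h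
    · exact main l1 (min_le_left _ _) h
    · exact main l2 (min_le_right _ _) h
end

section
/- Let θα ≥ θβ > 0 and let πs ∈ ℝ. Then (1/θα)·arccot(-πs/θα) ≤ (1/θβ)·arccot(-πs/θβ), where arccot takes values in (0, π). -/
open Real

lemma concave_arctan : ConcaveOn ℝ (Set.Ici (0:ℝ)) Real.arctan := by
  apply AntitoneOn.concaveOn_of_deriv (convex_Ici 0)
    Real.continuous_arctan.continuousOn
    (Real.differentiable_arctan.differentiableOn)
  rw [Real.deriv_arctan, interior_Ici]
  intro x hx y hy hxy
  have hx0 : (0:ℝ) < x := hx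
  apply one_div_le_one_div_of_le (by positivity)
  have : x ^ 2 ≤ y ^ 2 := by nlinarith
  linarith

lemma key_lemma {q p : ℝ} (hq : 0 < q) (hpq : q ≤ p) :
    q * Real.arctan p ≤ p * Real.arctan q := by
  have hp : 0 < p := lt_of_lt_of_le hq hpq
  have hqp : q / p ≤ 1 := (div_le_one hp).mpr hpq
  have hb : (0:ℝ) ≤ q / p := by positivity
  have h := concave_arctan.2 (Set.self_mem_Ici) (Set.mem_Ici.mpr hp.le)
      (show (0:ℝ) ≤ 1 - q / p by linarith) hb (by ring)
  simp only [smul_eq_mul, mul_zero, Real.arctan_zero, zero_add] at h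
  have hq' : q / p * p = q := div_mul_cancel₀ q hp.ne'
  rw [hq'] at h
  calc q * Real.arctan p = p * ((q / p) * Real.arctan p) := by
        field_simp
    _ ≤ p * Real.arctan q := by
        apply mul_le_mul_of_nonneg_left _ hp.le
        linarith

theorem arccot_bound_mono (θa θb πs : ℝ) (hb : 0 < θb) (hab : θb ≤ θa) :
    (1 / θa) * arccot (-πs / θa) ≤ (1 / θb) * arccot (-πs / θb) := by
  have ha : 0 < θa := lt_of_lt_of_le hb hab
  have harc : ∀ θ : ℝ, arccot (-πs / θ) = π / 2 + Real.arctan (πs / θ) := by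
    intro θ
    simp only [arccot, neg_div, Real.arctan_neg]
    ring
  rw [harc, harc]
  rcases le_or_gt 0 πs with hs | hs
  · -- πs ≥ 0 : product of nonneg monotone factors
    have h1 : 1 / θa ≤ 1 / θb := one_div_le_one_div_of_le hb hab
    have h2 : πs / θa ≤ πs / θb := div_le_div_of_nonneg_left hs hb hab
    have h3 : Real.arctan (πs / θa) ≤ Real.arctan (πs / θb) :=
      Real.arctan_strictMono.monotone h2
    have h4 : 0 ≤ π / 2 + Real.arctan (πs / θa) := by
      have := Real.neg_pi_div_two_lt_arctan (πs / θa)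
      linarith
    apply mul_le_mul h1 (by linarith) h4 (by positivity)
  · -- πs < 0
    set s := -πs with hsdef
    have hs0 : 0 < s := by simp [hsdef]; linarith
    have hrw : ∀ θ : ℝ, 0 < θ → π / 2 + Real.arctan (πs / θ) = Real.arctan (θ / s) := by
      intro θ hθ
      have hx : 0 < s / θ := by positivity
      have := Real.arctan_inv_of_pos hx
      rw [show (s / θ)⁻¹ = θ / s by rw [inv_div]] at this
      have hpn : πs / θ = -(s / θ) := by rw [hsdef]; ring
      rw [hpn, Real.arctan_neg]
      linarith
    rw [hrw θa ha, hrw θb hb]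
    have hkey := key_lemma (q := θb / s) (p := θa / s) (by positivity)
      (by gcongr)
    field_simp at hkey
    rw [div_mul_eq_mul_div, div_mul_eq_mul_div, div_le_div_iff₀ ha hb]
    nlinarith [hkey, hs0]
end

section
/- Let z1, z2, z3 : I → ℂ be a collision-free solution of the planar three-body problem with zero total linear momentum and center of mass at the origin, and let wk = mk·zk, Xk = Re wk, Yk = Im wk. Then the 2×2 matrix X with rows (X1, Y1) and (X2, Y2) satisfies X'' = A·X, where A is the matrix with entries A11 = -m2·ρ3 - (m1+m3)·ρ2, A12 = m1·(ρ3 - ρ2), A21 = m2·(ρ3 - ρ1), A22 = -m1·ρ3 - (m3+m2)·ρ1, with ρ1 = |z3 - z2|⁻³, ρ2 = |z1 - z3|⁻³, ρ3 = |z2 - z1|⁻³. -/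
attribute [local instance] Matrix.linftyOpNormedRing Matrix.linftyOpNormedAlgebra

open Matrix in
private lemma hasDerivAt_fin_two_matrix {a b c d : ℝ → ℝ} {p q r u t : ℝ}
    (ha : HasDerivAt a p t) (hb : HasDerivAt b q t)
    (hc : HasDerivAt c r t) (hd : HasDerivAt d u t) :
    HasDerivAt (fun s => !![a s, b s; c s, d s]) !![p, q; r, u] t := by
  have key : ∀ p q r u : ℝ,
      p • (Matrix.single (0:Fin 2) (0:Fin 2) (1:ℝ)) + q • (Matrix.single (0:Fin 2) (1:Fin 2) (1:ℝ)) +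
      r • (Matrix.single (1:Fin 2) (0:Fin 2) (1:ℝ)) + u • (Matrix.single (1:Fin 2) (1:Fin 2) (1:ℝ)) = !![p, q; r, u] := by
    intro p q r u
    ext i j
    fin_cases i <;> fin_cases j <;>
      simp [Matrix.single, Matrix.add_apply, Matrix.smul_apply]
  have H := (((ha.smul_const (Matrix.single (0:Fin 2) (0:Fin 2) (1:ℝ))).add
      (hb.smul_const (Matrix.single (0:Fin 2) (1:Fin 2) (1:ℝ)))).add
      (hc.smul_const (Matrix.single (1:Fin 2) (0:Fin 2) (1:ℝ)))).add
      (hd.smul_const (Matrix.single (1:Fin 2) (1:Fin 2) (1:ℝ)))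
  simp only [add_assoc] at H ⊢
  have heq : (fun s => a s • (Matrix.single (0:Fin 2) (0:Fin 2) (1:ℝ)) +
      (b s • (Matrix.single (0:Fin 2) (1:Fin 2) (1:ℝ)) + (c s • (Matrix.single (1:Fin 2) (0:Fin 2) (1:ℝ)) +
        d s • (Matrix.single (1:Fin 2) (1:Fin 2) (1:ℝ)))))
      = fun s => !![a s, b s; c s, d s] := by
    funext s
    rw [← key (a s) (b s) (c s) (d s)]
    simp [add_assoc]
  rw [← heq]
  have hval := key p q r u
  simp only [add_assoc] at hval
  rw [← hval]
  exact H

private lemma hasDerivAt_re {f : ℝ → ℂ} {u : ℂ} {t : ℝ} (hf : HasDerivAt f u t) :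
    HasDerivAt (fun s => (f s).re) u.re t :=
  Complex.reCLM.hasFDerivAt.comp_hasDerivAt t hf

private lemma hasDerivAt_im {f : ℝ → ℂ} {u : ℂ} {t : ℝ} (hf : HasDerivAt f u t) :
    HasDerivAt (fun s => (f s).im) u.im t :=
  Complex.imCLM.hasFDerivAt.comp_hasDerivAt t hf

open Matrix Set in
/-- For a collision-free solution of the planar three-body problem with zero total
momentum and center of mass at the origin, the matrix `X` with rows
`(X1, Y1)`, `(X2, Y2)` (where `wk = mk zk`) satisfies `X'' = A X`. -/
theorem three_body_matrix_equation
    (m1 m2 m3 : ℝ) (hm1 : 0 < m1) (hm2 : 0 < m2) (hm3 : 0 < m3)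
    (I : Set ℝ) (hI : IsOpen I)
    (z1 z2 z3 z1' z2' z3' z1'' z2'' z3'' : ℝ → ℂ)
    (hd1 : ∀ t ∈ I, HasDerivAt z1 (z1' t) t)
    (hd2 : ∀ t ∈ I, HasDerivAt z2 (z2' t) t)
    (hd3 : ∀ t ∈ I, HasDerivAt z3 (z3' t) t)
    (hd1' : ∀ t ∈ I, HasDerivAt z1' (z1'' t) t)
    (hd2' : ∀ t ∈ I, HasDerivAt z2' (z2'' t) t)
    (hd3' : ∀ t ∈ I, HasDerivAt z3' (z3'' t) t)
    (hcoll : ∀ t ∈ I, z1 t ≠ z2 t ∧ z2 t ≠ z3 t ∧ z3 t ≠ z1 t)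
    (hode1 : ∀ t ∈ I, z1'' t =
      (m2 : ℂ) * (z2 t - z1 t) / (‖z2 t - z1 t‖ : ℂ) ^ 3 -
      (m3 : ℂ) * (z1 t - z3 t) / (‖z1 t - z3 t‖ : ℂ) ^ 3)
    (hode2 : ∀ t ∈ I, z2'' t =
      (m3 : ℂ) * (z3 t - z2 t) / (‖z3 t - z2 t‖ : ℂ) ^ 3 -
      (m1 : ℂ) * (z2 t - z1 t) / (‖z2 t - z1 t‖ : ℂ) ^ 3)
    (hode3 : ∀ t ∈ I, z3'' t =
      (m1 : ℂ) * (z1 t - z3 t) / (‖z1 t - z3 t‖ : ℂ) ^ 3 -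
      (m2 : ℂ) * (z3 t - z2 t) / (‖z3 t - z2 t‖ : ℂ) ^ 3)
    (hcm : ∀ t ∈ I, (m1 : ℂ) * z1 t + (m2 : ℂ) * z2 t + (m3 : ℂ) * z3 t = 0)
    (hmom : ∀ t ∈ I, (m1 : ℂ) * z1' t + (m2 : ℂ) * z2' t + (m3 : ℂ) * z3' t = 0) :
    letI X : ℝ → Matrix (Fin 2) (Fin 2) ℝ := fun t =>
      !![((m1 : ℂ) * z1 t).re, ((m1 : ℂ) * z1 t).im;
         ((m2 : ℂ) * z2 t).re, ((m2 : ℂ) * z2 t).im]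
    letI X' : ℝ → Matrix (Fin 2) (Fin 2) ℝ := fun t =>
      !![((m1 : ℂ) * z1' t).re, ((m1 : ℂ) * z1' t).im;
         ((m2 : ℂ) * z2' t).re, ((m2 : ℂ) * z2' t).im]
    letI A : ℝ → Matrix (Fin 2) (Fin 2) ℝ := fun t =>
      letI ρ1 := ‖z3 t - z2 t‖ ^ (3 : ℕ)
      letI ρ2 := ‖z1 t - z3 t‖ ^ (3 : ℕ)
      letI ρ3 := ‖z2 t - z1 t‖ ^ (3 : ℕ)
      !![-m2 / ρ3 - (m1 + m3) / ρ2, m1 * (1 / ρ3 - 1 / ρ2);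
         m2 * (1 / ρ3 - 1 / ρ1), -m1 / ρ3 - (m3 + m2) / ρ1]
    ∀ t ∈ I, HasDerivAt X (X' t) t ∧ HasDerivAt X' (A t * X t) t := by
  intro t ht
  have h1 := (hd1 t ht).const_mul (m1 : ℂ)
  have h2 := (hd2 t ht).const_mul (m2 : ℂ)
  have h1' := (hd1' t ht).const_mul (m1 : ℂ)
  have h2' := (hd2' t ht).const_mul (m2 : ℂ)
  constructor
  · exact hasDerivAt_fin_two_matrix (hasDerivAt_re h1) (hasDerivAt_im h1)
      (hasDerivAt_re h2) (hasDerivAt_im h2)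
  · -- algebraic identities
    beta_reduce
    set ρ1 : ℝ := ‖z3 t - z2 t‖ ^ (3 : ℕ) with hρ1
    set ρ2 : ℝ := ‖z1 t - z3 t‖ ^ (3 : ℕ) with hρ2
    set ρ3 : ℝ := ‖z2 t - z1 t‖ ^ (3 : ℕ) with hρ3
    have C1 : (m1 : ℂ) * z1'' t =
        ((-m2 / ρ3 - (m1 + m3) / ρ2 : ℝ) : ℂ) * ((m1 : ℂ) * z1 t) +
        ((m1 * (1 / ρ3 - 1 / ρ2) : ℝ) : ℂ) * ((m2 : ℂ) * z2 t) := by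
      rw [hode1 t ht, hρ2, hρ3]
      push_cast
      linear_combination ((m1 : ℂ) / (‖z1 t - z3 t‖ : ℂ) ^ 3) * hcm t ht
    have C2 : (m2 : ℂ) * z2'' t =
        ((m2 * (1 / ρ3 - 1 / ρ1) : ℝ) : ℂ) * ((m1 : ℂ) * z1 t) +
        ((-m1 / ρ3 - (m3 + m2) / ρ1 : ℝ) : ℂ) * ((m2 : ℂ) * z2 t) := by
      rw [hode2 t ht, hρ1, hρ3]
      push_cast
      linear_combination ((m2 : ℂ) / (‖z3 t - z2 t‖ : ℂ) ^ 3) * hcm t ht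
    have hAX : (!![-m2 / ρ3 - (m1 + m3) / ρ2, m1 * (1 / ρ3 - 1 / ρ2);
         m2 * (1 / ρ3 - 1 / ρ1), -m1 / ρ3 - (m3 + m2) / ρ1] : Matrix (Fin 2) (Fin 2) ℝ) *
         !![((m1 : ℂ) * z1 t).re, ((m1 : ℂ) * z1 t).im;
            ((m2 : ℂ) * z2 t).re, ((m2 : ℂ) * z2 t).im] =
        !![((m1 : ℂ) * z1'' t).re, ((m1 : ℂ) * z1'' t).im;
           ((m2 : ℂ) * z2'' t).re, ((m2 : ℂ) * z2'' t).im] := by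
      ext i j
      fin_cases i <;> fin_cases j <;>
        simp only [Matrix.mul_apply, Fin.sum_univ_two, Matrix.cons_val', Matrix.cons_val_zero,
          Matrix.cons_val_one, Matrix.head_cons, Matrix.head_fin_const, Matrix.empty_val',
          Matrix.cons_val_fin_one] <;>
        [rw [C1]; rw [C1]; rw [C2]; rw [C2]] <;>
        simp [Complex.add_re, Complex.add_im, Complex.re_ofReal_mul, Complex.im_ofReal_mul]
    rw [hAX]
    exact hasDerivAt_fin_two_matrix (hasDerivAt_re h1') (hasDerivAt_im h1')
      (hasDerivAt_re h2') (hasDerivAt_im h2')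
end

section
/- Suppose B1, B2 : [0, T) → ℝ are differentiable solutions of the scalar Riccati equations B1' + B1² + R1 = 0 and B2' + B2² + R2 = 0 with R1(t) ≥ R2(t) for all t and B1(0) ≤ B2(0). Then B1(t) ≤ B2(t) for all t ∈ [0, T). -/
open Set in
/-- Scalar Riccati comparison theorem (Eschenburg–Heintze, 1-dimensional case). -/
theorem scalar_riccati_comparison (T : ℝ) (B1 B2 R1 R2 : ℝ → ℝ)
    (hR1 : ContinuousOn R1 (Ico 0 T)) (hR2 : ContinuousOn R2 (Ico 0 T))
    (hB1 : ∀ t ∈ Ico (0 : ℝ) T, HasDerivWithinAt B1 (-(B1 t) ^ 2 - R1 t) (Ico 0 T) t)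
    (hB2 : ∀ t ∈ Ico (0 : ℝ) T, HasDerivWithinAt B2 (-(B2 t) ^ 2 - R2 t) (Ico 0 T) t)
    (hR : ∀ t ∈ Ico (0 : ℝ) T, R2 t ≤ R1 t)
    (h0 : B1 0 ≤ B2 0) :
    ∀ t ∈ Ico (0 : ℝ) T, B1 t ≤ B2 t := by
  intro t ht
  have hT : 0 < T := lt_of_le_of_lt ht.1 ht.2
  have h0mem : (0 : ℝ) ∈ Ico (0 : ℝ) T := ⟨le_refl 0, hT⟩
  set s : Set ℝ := Ico (0 : ℝ) T with hs
  have hc1 : ContinuousOn B1 s := fun x hx => (hB1 x hx).continuousWithinAt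
  have hc2 : ContinuousOn B2 s := fun x hx => (hB2 x hx).continuousWithinAt
  set F : ℝ → ℝ := fun x => B1 x + B2 x with hF
  have hFc : ContinuousOn F s := hc1.add hc2
  set φ : ℝ → ℝ := fun u => ∫ x in (0:ℝ)..u, F x with hφdef
  -- φ is continuous on s
  have hφc : ContinuousOn φ s := by
    intro x hx
    obtain ⟨c, hxc, hcT⟩ := exists_between hx.2
    have hsub : uIcc (0:ℝ) c ⊆ s := by
      rw [uIcc_of_le (le_trans hx.1 (le_of_lt hxc))]
      exact fun y hy => ⟨hy.1, lt_of_le_of_lt hy.2 hcT⟩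
    have hint : MeasureTheory.IntegrableOn F (uIcc (0:ℝ) c) :=
      (hFc.mono hsub).integrableOn_compact isCompact_uIcc
    have hcont : ContinuousOn φ (uIcc (0:ℝ) c) :=
      intervalIntegral.continuousOn_primitive_interval hint
    have hxmem : x ∈ uIcc (0:ℝ) c := by
      rw [uIcc_of_le (le_trans hx.1 (le_of_lt hxc))]
      exact ⟨hx.1, le_of_lt hxc⟩
    have := hcont x hxmem
    refine this.mono_of_mem_nhdsWithin ?_
    have : Iio c ∈ nhdsWithin x s := nhdsWithin_le_nhds (Iio_mem_nhds hxc)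
    filter_upwards [this, self_mem_nhdsWithin] with y hy hys
    rw [uIcc_of_le (le_trans hx.1 (le_of_lt hxc))]
    exact ⟨hys.1, le_of_lt hy⟩
  -- φ has derivative F at interior points
  have hsnhds : ∀ x ∈ Ioo (0:ℝ) T, s ∈ nhds x := fun x hx =>
    Filter.mem_of_superset (isOpen_Ioo.mem_nhds hx) (fun y hy => ⟨le_of_lt hy.1, hy.2⟩)
  have hφd : ∀ x ∈ Ioo (0:ℝ) T, HasDerivAt φ (F x) x := by
    intro x hx
    have hsub : uIcc (0:ℝ) x ⊆ s := by
      rw [uIcc_of_le (le_of_lt hx.1)]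
      exact fun y hy => ⟨hy.1, lt_of_le_of_lt hy.2 hx.2⟩
    have hint : IntervalIntegrable F MeasureTheory.volume 0 x :=
      (hFc.mono hsub).intervalIntegrable
    have hca : ContinuousAt F x := hFc.continuousAt (hsnhds x hx)
    have hmeas : StronglyMeasurableAtFilter F (nhds x) MeasureTheory.volume :=
      ContinuousOn.stronglyMeasurableAtFilter isOpen_Ioo
        (hFc.mono (fun y hy => ⟨le_of_lt hy.1, hy.2⟩)) x hx
    exact intervalIntegral.integral_hasDerivAt_right hint hmeas hca
  -- the integrating-factor function g
  set g : ℝ → ℝ := fun u => (B2 u - B1 u) * Real.exp (φ u) with hg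
  have hgc : ContinuousOn g s :=
    (hc2.sub hc1).mul (Real.continuous_exp.comp_continuousOn hφc)
  have hmono : MonotoneOn g s := by
    apply monotoneOn_of_hasDerivWithinAt_nonneg (f' := fun x =>
      Real.exp (φ x) * (R1 x - R2 x)) (convex_Ico 0 T) hgc
    · intro x hx
      rw [interior_Ico] at hx
      have hxs : x ∈ s := ⟨le_of_lt hx.1, hx.2⟩
      have hd1 : HasDerivAt B1 (-(B1 x) ^ 2 - R1 x) x :=
        (hB1 x hxs).hasDerivAt (hsnhds x hx)
      have hd2 : HasDerivAt B2 (-(B2 x) ^ 2 - R2 x) x :=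
        (hB2 x hxs).hasDerivAt (hsnhds x hx)
      have hde : HasDerivAt (fun u => Real.exp (φ u)) (Real.exp (φ x) * F x) x :=
        (hφd x hx).exp
      have := ((hd2.sub hd1).mul hde)
      have heq : (-(B2 x) ^ 2 - R2 x - (-(B1 x) ^ 2 - R1 x)) * Real.exp (φ x)
          + (B2 x - B1 x) * (Real.exp (φ x) * F x)
          = Real.exp (φ x) * (R1 x - R2 x) := by
        simp only [hF]; ring
      rw [Pi.sub_apply, heq] at this
      exact this.hasDerivWithinAt
    · intro x hx
      rw [interior_Ico] at hx
      have hxs : x ∈ s := ⟨le_of_lt hx.1, hx.2⟩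
      exact mul_nonneg (le_of_lt (Real.exp_pos _)) (sub_nonneg.mpr (hR x hxs))
  have hg0 : 0 ≤ g 0 := mul_nonneg (sub_nonneg.mpr h0) (le_of_lt (Real.exp_pos _))
  have hgt : 0 ≤ g t := le_trans hg0 (hmono h0mem ht ht.1)
  have hexp : 0 < Real.exp (φ t) := Real.exp_pos _
  have hgt' : 0 ≤ (B2 t - B1 t) * Real.exp (φ t) := hgt
  nlinarith [hgt', hexp]
end
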